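/- arXiv:1511.02334 — 2 statements merged into one kernel-verified Lean document; each statement's English description precedes it below -/
import Mathlib

section
/- For every div point set X of 5 points in the class DPS⁺, the number of sub div point sets of 4 points of X that are isomorphic to Conc₄¹ is exactly 0, 2, or 4, and every remaining sub div point set of 4 points of X is isomorphic to Conv₄ (Theorem 2). -/
/-!
On four points a div point set is determined by which dividers are *joined*, i.e. leave the two
other points in a common div. By (L1) every point lies on an odd number of split dividers and by
(L3) no three split dividers form a triangle, so the split dividers form either a star, and the
sub div point set is Conc₄¹ with 3 joined dividers, or a perfect matching, and it is Conv₄ with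
4 joined dividers.

For five points, count the pairs of a 4-subset `P` and a joined divider `d` of its sub div point
set. For fixed `d` the three points outside `d` are split into two divs by the dividon of `d`, so
`d` is joined in 1 or 3 of the subsets `P ⊇ d`. The total is a sum of ten odd numbers, hence even,
so an even number of the five sub div point sets have an odd number of joined dividers, that is,
are Conc₄¹.
-/

open Finset

/-- A (unit) dividon: an ordered pair of a divider and a set of divs. -/
abbrev Dividon : Type := Finset ℕ × Finset (Finset ℕ)

/-- A candidate (unit) div point set: a pair of a point set and a set of dividons. -/
abbrev PreDPS : Type := Finset ℕ × Finset Dividon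

/-- The union `⋃δ` of a set of divs. -/
def unionOf (δ : Finset (Finset ℕ)) : Finset ℕ := δ.sup id

/-- `ξ(D) = π₁(D) ∪ ⋃π₂(D)`. -/
def xi (D : Dividon) : Finset ℕ := D.1 ∪ unionOf D.2

/-- `D = (d, δ)` is a dividon over the point set `P`. -/
def IsDividon (P : Finset ℕ) (D : Dividon) : Prop :=
  D.1.card = 2 ∧ D.1 ⊆ P ∧
    ∃ A B : Finset ℕ, A ≠ B ∧ D.2 = {A, B} ∧ A ∪ B = P \ D.1 ∧ A ∩ B = ∅

/-- `X` is a div point set. -/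
def IsDPS (X : PreDPS) : Prop :=
  X.1.Nonempty ∧ X.2.card = Nat.choose X.1.card 2 ∧
    (∀ D ∈ X.2, IsDividon X.1 D) ∧
    ∀ D₁ ∈ X.2, ∀ D₂ ∈ X.2, D₁.1 = D₂.1 → D₁ = D₂

/-- `φ(δ,T) = 1` if the two TBD points of `T` lie in the same div of `δ`,
`φ(δ,T) = 0` otherwise. -/
def phi (δ : Finset (Finset ℕ)) (T : Finset ℕ) : ℕ :=
  if ∃ dv ∈ δ, (T ∩ dv).card = 2 then 1 else 0

/-- `ψ(δ) = 1` if some div of `δ` has two elements, `ψ(δ) = 0` otherwise. -/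
def psi (δ : Finset (Finset ℕ)) : ℕ :=
  if ∃ dv ∈ δ, dv.card = 2 then 1 else 0

/-- Laws (L1), (L2), (L3) for div point sets. -/
def LawsDPS (X : PreDPS) : Prop :=
  (∀ R ⊆ X.1, R.card = 4 →
    ∀ D₁ ∈ X.2, ∀ D₂ ∈ X.2, ∀ D₃ ∈ X.2,
      D₁.1 ∪ D₂.1 ∪ D₃.1 = R → (D₁.1 ∩ D₂.1 ∩ D₃.1).card = 1 →
      (phi D₁.2 (R \ D₁.1) = 0 ↔ phi D₂.2 (R \ D₂.1) = phi D₃.2 (R \ D₃.1))) ∧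
  (∀ R ⊆ X.1, R.card = 4 →
    ∀ D₁ ∈ X.2, ∀ D₂ ∈ X.2, ∀ D₃ ∈ X.2,
      D₁.1 ∪ D₂.1 ∪ D₃.1 = R → (D₁.1 ∩ D₂.1 ∩ D₃.1).card = 1 →
      (phi D₁.2 (R \ D₁.1) = 1 ↔ phi D₂.2 (R \ D₂.1) ≠ phi D₃.2 (R \ D₃.1))) ∧
  (∀ R ⊆ X.1, R.card = 4 →
    ∀ D₁ ∈ X.2, ∀ D₂ ∈ X.2, ∀ D₃ ∈ X.2,
      D₁ ≠ D₂ → D₁ ≠ D₃ → D₂ ≠ D₃ →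
      D₁.1 ∪ D₂.1 ∪ D₃.1 ⊆ R → (D₁.1 ∪ D₂.1 ∪ D₃.1).card = 3 →
      phi D₁.2 (R \ D₁.1) = 0 → phi D₂.2 (R \ D₂.1) = 0 →
      phi D₃.2 (R \ D₃.1) = 1)

/-- The class DPS⁺: div point sets satisfying (L1), (L2), (L3). -/
def DPSplus (X : PreDPS) : Prop := IsDPS X ∧ LawsDPS X

/-- `D = (d, δ)` is a unit dividon over the point set `P`. -/
def IsUnitDividon (P : Finset ℕ) (D : Dividon) : Prop :=
  D.1.card = 2 ∧ D.1 ⊆ P ∧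
    ∃ A B : Finset ℕ, A ≠ B ∧ D.2 = {A, B} ∧ (A ∪ B).card = 2 ∧
      A ∪ B ⊆ P \ D.1 ∧ A ∩ B = ∅

/-- `U` is a unit div point set. -/
def IsUDPS (U : PreDPS) : Prop :=
  U.1.Nonempty ∧
    U.2.card = Nat.choose U.1.card 2 * Nat.choose (U.1.card - 2) 2 ∧
    (∀ D ∈ U.2, IsUnitDividon U.1 D) ∧
    ∀ D₁ ∈ U.2, ∀ D₂ ∈ U.2,
      D₁.1 = D₂.1 → unionOf D₁.2 = unionOf D₂.2 → D₁ = D₂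

/-- Laws (U1), (U2), (U3) for unit div point sets. -/
def LawsUDPS (U : PreDPS) : Prop :=
  (∀ R ⊆ U.1, R.card = 4 →
    ∀ D₁ ∈ U.2, ∀ D₂ ∈ U.2, ∀ D₃ ∈ U.2,
      D₁ ≠ D₂ → D₁ ≠ D₃ → D₂ ≠ D₃ →
      xi D₁ = R → xi D₂ = R → xi D₃ = R →
      (D₁.1 ∩ D₂.1 ∩ D₃.1).card = 1 →
      (psi D₁.2 = 0 ↔ psi D₂.2 = psi D₃.2)) ∧
  (∀ R ⊆ U.1, R.card = 4 →
    ∀ D₁ ∈ U.2, ∀ D₂ ∈ U.2, ∀ D₃ ∈ U.2,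
      D₁ ≠ D₂ → D₁ ≠ D₃ → D₂ ≠ D₃ →
      xi D₁ = R → xi D₂ = R → xi D₃ = R →
      (D₁.1 ∩ D₂.1 ∩ D₃.1).card = 1 →
      (psi D₁.2 = 1 ↔ psi D₂.2 ≠ psi D₃.2)) ∧
  (∀ R ⊆ U.1, R.card = 4 →
    ∀ D₁ ∈ U.2, ∀ D₂ ∈ U.2, ∀ D₃ ∈ U.2,
      D₁ ≠ D₂ → D₁ ≠ D₃ → D₂ ≠ D₃ →
      xi D₁ = R → xi D₂ = R → xi D₃ = R →
      (D₁.1 ∪ D₂.1 ∪ D₃.1).card = 3 →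
      psi D₁.2 = 0 → psi D₂.2 = 0 → psi D₃.2 = 1)

/-- The class UDPS⁺: unit div point sets satisfying (U1), (U2), (U3). -/
def UDPSplus (U : PreDPS) : Prop := IsUDPS U ∧ LawsUDPS U

/-- `F_udps`: breaks every dividon of a div point set into unit dividons,
one for each 2-element subset `T = {a,b}` of the TBD points: the unit dividon is
`(d, {{a,b},∅})` if `a` and `b` lie in the same div, and `(d, {{a},{b}})` otherwise. -/
def Fudps (X : PreDPS) : PreDPS :=
  (X.1, X.2.biUnion fun D =>
    ((X.1 \ D.1).powersetCard 2).image fun T =>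
      (D.1, if ∃ dv ∈ D.2, T ⊆ dv then ({T, ∅} : Finset (Finset ℕ))
            else T.image fun a => ({a} : Finset ℕ)))

/-- `Y` is the sub div point set of `X` on the point set `Ps` (where `4 ≤ |Ps|`):
the unique div point set with point set `Ps` whose image under `F_udps` has exactly
the unit dividons `D` of `F_udps X` with `ξ(D) ⊆ Ps`. -/
def IsSdps (X : PreDPS) (Ps : Finset ℕ) (Y : PreDPS) : Prop :=
  Ps ⊆ X.1 ∧ 4 ≤ Ps.card ∧ IsDPS Y ∧ Y.1 = Ps ∧
    (Fudps Y).2 = (Fudps X).2.filter fun D => xi D ⊆ Ps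

/-- Isomorphism of (candidate) div point sets. -/
def Isom (X Y : PreDPS) : Prop :=
  ∃ f : ℕ → ℕ, Set.BijOn f ↑X.1 ↑Y.1 ∧
    ∀ D ∈ X.2, (D.1.image f, D.2.image (Finset.image f)) ∈ Y.2

/-- Isomorphism of sets of (unit) dividons. -/
def OmegaIsom (Ω₁ Ω₂ : Finset Dividon) : Prop :=
  Ω₁.card = Ω₂.card ∧
    ∃ f : ℕ → ℕ, Set.BijOn f ↑(Ω₁.sup xi) ↑(Ω₂.sup xi) ∧
      ∀ D ∈ Ω₁, (D.1.image f, D.2.image (Finset.image f)) ∈ Ω₂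

/-- The div point set Conc₄¹. -/
def Conc41 : PreDPS :=
  ({1, 2, 3, 4},
   {({1, 2}, {{3}, {4}}), ({1, 3}, {{2}, {4}}), ({1, 4}, {{2}, {3}}),
    ({2, 3}, {{1, 4}, ∅}), ({2, 4}, {{1, 3}, ∅}), ({3, 4}, {{1, 2}, ∅})})

/-- The div point set Conv₄. -/
def Conv4 : PreDPS :=
  ({1, 2, 3, 4},
   {({1, 2}, {{3, 4}, ∅}), ({1, 3}, {{2}, {4}}), ({1, 4}, {{2, 3}, ∅}),
    ({2, 3}, {{1, 4}, ∅}), ({2, 4}, {{1}, {3}}), ({3, 4}, {{1, 2}, ∅})})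

/-- The div point set Conv_n on `{1, …, n}`: the dividon with divider `d = {i,j}`,
`i < j`, has divs `{p : i < p < j}` and `{p : p < i or p > j}`. -/
def ConvN (n : ℕ) : PreDPS :=
  (Finset.Icc 1 n,
   ((Finset.Icc 1 n).powersetCard 2).image fun d =>
     (d, ({(Finset.Icc 1 n).filter fun p => (∃ i ∈ d, i < p) ∧ ∃ j ∈ d, p < j,
           (Finset.Icc 1 n).filter fun p =>
             (∀ i ∈ d, p < i) ∨ ∀ i ∈ d, i < p} : Finset (Finset ℕ))))


section Image

variable {α β : Type*} [DecidableEq β] {f : α → β}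

lemma image_powersetCard_of_bijOn {s : Finset α} {t : Finset β} (hf : Set.BijOn f s t) (n : ℕ) :
    (s.powersetCard n).image (image f) = t.powersetCard n := by
  ext e
  simp only [mem_image, mem_powersetCard]
  constructor
  · rintro ⟨d, ⟨hds, rfl⟩, rfl⟩
    exact ⟨fun y hy => by
      obtain ⟨x, hx, rfl⟩ := mem_image.1 hy
      exact hf.mapsTo (hds hx), card_image_of_injOn (hf.injOn.mono (coe_subset.2 hds))⟩
  · rintro ⟨het, rfl⟩
    have himage : (s.filter (f · ∈ e)).image f = e := by
      ext y
      simp only [mem_image, mem_filter]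
      constructor
      · rintro ⟨x, ⟨-, hx⟩, rfl⟩
        exact hx
      · intro hy
        obtain ⟨x, hx, rfl⟩ := hf.surjOn (het hy)
        exact ⟨x, ⟨hx, hy⟩, rfl⟩
    refine ⟨s.filter (f · ∈ e), ⟨filter_subset _ _, ?_⟩, himage⟩
    rw [← card_image_of_injOn (hf.injOn.mono (coe_subset.2 (filter_subset _ _))), himage]

lemma mem_image_iff_of_injOn {s e : Finset α} {x : α} (hf : Set.InjOn f s)
    (he : e ⊆ s) (hx : x ∈ s) : f x ∈ e.image f ↔ x ∈ e := by
  rw [← mem_coe, coe_image]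
  exact hf.mem_image_iff (coe_subset.2 he) hx

end Image

lemma card_sdiff_eq_two {R d : Finset ℕ} (hR4 : R.card = 4) (hd : d ∈ R.powersetCard 2) :
    (R \ d).card = 2 := by
  rw [card_sdiff_of_subset (mem_powersetCard.1 hd).1, (mem_powersetCard.1 hd).2, hR4]

-- The divs `{{a, b}, ∅}` (joined) or `{{a}, {b}}` (split) that `Fudps` gives the unit dividon
-- on `T = {a, b}`.
def unitDivs (T : Finset ℕ) (joined : Prop) [Decidable joined] : Finset (Finset ℕ) :=
  if joined then {T, ∅} else T.image fun a => ({a} : Finset ℕ)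

section UnitDivs

variable {T : Finset ℕ} {c : Prop} [Decidable c]

@[simp]
lemma unionOf_unitDivs : unionOf (unitDivs T c) = T := by
  unfold unitDivs unionOf
  split_ifs <;> ext <;> simp

lemma empty_mem_unitDivs : ∅ ∈ unitDivs T c ↔ c := by
  unfold unitDivs
  split_ifs <;> simp [*]

lemma image_unitDivs (f : ℕ → ℕ) :
    (unitDivs T c).image (image f) = unitDivs (T.image f) c := by
  unfold unitDivs
  split_ifs <;> simp [image_image, Function.comp_def]

lemma unitDivs_eq_pair {A B : Finset ℕ} (hAB : A ∪ B = T) (hdisj : A ∩ B = ∅)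
    (hT : T.card = 2) : unitDivs T (∃ dv ∈ ({A, B} : Finset (Finset ℕ)), T ⊆ dv) = {A, B} := by
  unfold unitDivs
  split_ifs with h
  · obtain ⟨dv, hdv, hT⟩ := h
    wlog hA : dv = A generalizing A B
    · rw [pair_comm A B] at hdv ⊢
      exact this (union_comm A B ▸ hAB) (inter_comm A B ▸ hdisj) hdv
        ((mem_insert.1 hdv).resolve_right (by simpa using hA))
    subst hA
    have hB : B = ∅ := by
      rw [← hdisj, inter_eq_right.2 ((hAB ▸ subset_union_right).trans hT)]
    rw [← hAB, hB, union_empty]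
  · obtain ⟨x, y, -, rfl⟩ := card_eq_two.1 hT
    have hmem : ∀ z, z ∈ A ∨ z ∈ B ↔ z = x ∨ z = y := fun z => by
      simpa using congrArg (z ∈ ·) hAB
    have hnot : ∀ z, ¬ (z ∈ A ∧ z ∈ B) := fun z h => by
      simpa [hdisj] using mem_inter.2 h
    simp only [mem_insert, mem_singleton, exists_eq_or_imp, exists_eq_left,
      insert_subset_iff, singleton_subset_iff, not_or, not_and_or] at h
    have : (A = {x} ∧ B = {y}) ∨ (A = {y} ∧ B = {x}) := by
      simp only [eq_singleton_iff_unique_mem]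
      grind
    rcases this with ⟨rfl, rfl⟩ | ⟨rfl, rfl⟩ <;> simp [pair_comm]

lemma exists_pair_unitDivs (hT : T.card = 2) :
    ∃ A B, A ≠ B ∧ unitDivs T c = {A, B} ∧ A ∪ B = T ∧ A ∩ B = ∅ := by
  unfold unitDivs
  split_ifs
  · exact ⟨T, ∅, by rintro rfl; simp at hT, rfl, union_empty T, inter_empty T⟩
  · obtain ⟨x, y, hxy, rfl⟩ := card_eq_two.1 hT
    exact ⟨{x}, {y}, by simpa using hxy, by simp, rfl,
      disjoint_iff_inter_eq_empty.1 (disjoint_singleton.2 hxy)⟩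

end UnitDivs

-- On four points the dividon with divider `d` only records whether the other two points are
-- joined; in `quadDPS P J` they are joined exactly when `J d`.
def quadDPS (P : Finset ℕ) (J : Finset ℕ → Prop) [DecidablePred J] : PreDPS :=
  (P, (P.powersetCard 2).image fun d => (d, unitDivs (P \ d) (J d)))

section QuadDPS

variable {J : Finset ℕ → Prop} [DecidablePred J] {K : Finset ℕ → Prop} [DecidablePred K]

lemma mem_quadDPS {P d : Finset ℕ} {δ : Finset (Finset ℕ)} :
    (d, δ) ∈ (quadDPS P J).2 ↔ d ∈ P.powersetCard 2 ∧ δ = unitDivs (P \ d) (J d) := by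
  simp only [quadDPS, mem_image, Prod.mk.injEq]
  constructor
  · rintro ⟨d, hd, rfl, rfl⟩
    exact ⟨hd, rfl⟩
  · rintro ⟨hd, rfl⟩
    exact ⟨d, hd, rfl, rfl⟩

lemma isDPS_quadDPS {P : Finset ℕ} (hP : P.card = 4) : IsDPS (quadDPS P J) := by
  refine ⟨(card_pos.1 (by omega) : P.Nonempty), ?_, ?_, ?_⟩
  · rw [quadDPS, card_image_of_injective _ fun _ _ h => congrArg Prod.fst h,
      card_powersetCard]
  · rintro ⟨d, δ⟩ hD
    obtain ⟨hd, rfl⟩ := mem_quadDPS.1 hD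
    obtain ⟨hdP, hd2⟩ := mem_powersetCard.1 hd
    exact ⟨hd2, hdP, exists_pair_unitDivs (card_sdiff_eq_two hP hd)⟩
  · rintro ⟨d, δ⟩ h₁ ⟨d', δ'⟩ h₂ (rfl : d = d')
    rw [(mem_quadDPS.1 h₁).2, (mem_quadDPS.1 h₂).2]

lemma isom_quadDPS_iff {s t : Finset ℕ} :
    Isom (quadDPS s J) (quadDPS t K) ↔
      ∃ f : ℕ → ℕ, Set.BijOn f s t ∧ ∀ d ∈ s.powersetCard 2, (K (d.image f) ↔ J d) := by
  constructor
  · rintro ⟨f, hf, hmap⟩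
    refine ⟨f, hf, fun d hd => ?_⟩
    have h := (mem_quadDPS.1 (hmap (d, unitDivs (s \ d) (J d)) (mem_quadDPS.2 ⟨hd, rfl⟩))).2
    rw [image_unitDivs] at h
    -- `∅` is a div of exactly the joined dividers.
    calc K (d.image f) ↔ ∅ ∈ unitDivs (t \ d.image f) (K (d.image f)) :=
          empty_mem_unitDivs.symm
      _ ↔ ∅ ∈ unitDivs ((s \ d).image f) (J d) := by rw [h]
      _ ↔ J d := empty_mem_unitDivs
  · rintro ⟨f, hf, hJK⟩
    refine ⟨f, hf, ?_⟩
    rintro ⟨d, δ⟩ hD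
    obtain ⟨hd, rfl⟩ := mem_quadDPS.1 hD
    have hst : s.image f = t := by exact_mod_cast hf.image_eq
    refine mem_quadDPS.2 ⟨image_powersetCard_of_bijOn hf 2 ▸ mem_image_of_mem _ hd, ?_⟩
    simp only [image_unitDivs, image_sdiff_of_injOn hf.injOn (mem_powersetCard.1 hd).1, hst,
      hJK d hd]

lemma card_filter_eq_of_isom {s t : Finset ℕ} (h : Isom (quadDPS s J) (quadDPS t K)) :
    #{d ∈ s.powersetCard 2 | J d} = #{d ∈ t.powersetCard 2 | K d} := by
  obtain ⟨f, hf, hJK⟩ := isom_quadDPS_iff.1 h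
  have hinj : Set.InjOn (image f) (s.powersetCard 2 : Set (Finset ℕ)) :=
    (image_injOn_powerset_of_injOn hf.injOn).mono fun d hd =>
      mem_powerset.2 (mem_powersetCard.1 hd).1
  rw [← image_powersetCard_of_bijOn hf, filter_image,
    card_image_of_injOn (hinj.mono (coe_subset.2 (filter_subset _ _)))]
  exact congrArg card (filter_congr fun d hd => (hJK d hd).symm)

lemma conc41_eq_quadDPS : Conc41 = quadDPS {1, 2, 3, 4} (1 ∉ ·) := by
  decide

-- The split dividers of Conv₄ form the matching `{1, 3}`, `{2, 4}`.
lemma conv4_eq_quadDPS :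
    Conv4 = quadDPS {1, 2, 3, 4} fun d => (1 ∈ d ∨ 3 ∈ d) ∧ (2 ∈ d ∨ 4 ∈ d) := by
  decide

end QuadDPS

section Relabel

variable {J : Finset ℕ → Prop} [DecidablePred J]

lemma exists_bijOn_one_two_three_four {a b c d : ℕ} (hab : a ≠ b) (hac : a ≠ c) (had : a ≠ d)
    (hbc : b ≠ c) (hbd : b ≠ d) (hcd : c ≠ d) :
    ∃ f : ℕ → ℕ, Set.BijOn f ({a, b, c, d} : Finset ℕ) ({1, 2, 3, 4} : Finset ℕ) ∧
      f a = 1 ∧ f b = 2 ∧ f c = 3 ∧ f d = 4 := by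
  refine ⟨fun n => if n = a then 1 else if n = b then 2 else if n = c then 3 else 4,
    ⟨?_, ?_, ?_⟩, ?_⟩
  all_goals simp only [Set.MapsTo, Set.InjOn, Set.SurjOn, Set.subset_def, coe_insert,
    coe_singleton, Set.mem_insert_iff, Set.mem_singleton_iff, Set.mem_image]
  all_goals grind

lemma isom_conc41_of_apex {P : Finset ℕ} (hP : P.card = 4) {a : ℕ} (ha : a ∈ P)
    (hJ : ∀ e ∈ P.powersetCard 2, (J e ↔ a ∉ e)) : Isom (quadDPS P J) Conc41 := by
  obtain ⟨b, c, d, hbc, hbd, hcd, hbcd⟩ :=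
    card_eq_three.1 (by rw [card_erase_of_mem ha, hP] : (P.erase a).card = 3)
  have hP' : P = {a, b, c, d} := by rw [← insert_erase ha, hbcd]
  have hne : b ≠ a ∧ c ≠ a ∧ d ≠ a := by
    simpa [hbcd] using fun x (hx : x ∈ P.erase a) => ne_of_mem_erase hx
  subst hP'
  obtain ⟨f, hf, hfa, -⟩ := exists_bijOn_one_two_three_four hne.1.symm hne.2.1.symm
    hne.2.2.symm hbc hbd hcd
  rw [conc41_eq_quadDPS, isom_quadDPS_iff]
  refine ⟨f, hf, fun e he => ?_⟩
  rw [hJ e he, ← hfa, mem_image_iff_of_injOn hf.injOn (mem_powersetCard.1 he).1 ha]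

lemma isom_conv4_of_matching {P : Finset ℕ} {a b c d : ℕ} (hab : a ≠ b) (hac : a ≠ c)
    (had : a ≠ d) (hbc : b ≠ c) (hbd : b ≠ d) (hcd : c ≠ d) (hP : P = {a, b, c, d})
    (hJ : ∀ e ∈ P.powersetCard 2, (J e ↔ (a ∈ e ∨ c ∈ e) ∧ (b ∈ e ∨ d ∈ e))) :
    Isom (quadDPS P J) Conv4 := by
  subst hP
  obtain ⟨f, hf, hfa, hfb, hfc, hfd⟩ := exists_bijOn_one_two_three_four hab hac had hbc hbd hcd
  rw [conv4_eq_quadDPS, isom_quadDPS_iff]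
  refine ⟨f, hf, fun e he => ?_⟩
  have hmem {x} (hx : x ∈ ({a, b, c, d} : Finset ℕ)) :=
    mem_image_iff_of_injOn hf.injOn (mem_powersetCard.1 he).1 hx
  rw [hJ e he, ← hfa, ← hfb, ← hfc, ← hfd, hmem (by simp), hmem (by simp), hmem (by simp),
    hmem (by simp)]

end Relabel

def SameDiv (X : PreDPS) (d T : Finset ℕ) : Prop :=
  ∃ D ∈ X.2, D.1 = d ∧ ∃ dv ∈ D.2, T ⊆ dv

instance (X : PreDPS) (d T : Finset ℕ) : Decidable (SameDiv X d T) :=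
  inferInstanceAs (Decidable (∃ D ∈ X.2, D.1 = d ∧ ∃ dv ∈ D.2, T ⊆ dv))

def subDPS (X : PreDPS) (P : Finset ℕ) : PreDPS :=
  quadDPS P fun d => SameDiv X d (P \ d)

lemma fudps_snd (X : PreDPS) :
    (Fudps X).2 = X.2.biUnion fun D =>
      ((X.1 \ D.1).powersetCard 2).image fun T => (D.1, unitDivs T (∃ dv ∈ D.2, T ⊆ dv)) :=
  rfl

namespace IsDPS

variable {X : PreDPS}

lemma exists_dividon (hX : IsDPS X) {d : Finset ℕ} (hd : d ∈ X.1.powersetCard 2) :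
    ∃ δ, (d, δ) ∈ X.2 := by
  obtain ⟨-, hcard, hdiv, huniq⟩ := hX
  have hsub : X.2.image Prod.fst ⊆ X.1.powersetCard 2 := fun e he => by
    obtain ⟨D, hD, rfl⟩ := mem_image.1 he
    exact mem_powersetCard.2 ⟨(hdiv D hD).2.1, (hdiv D hD).1⟩
  have heq : X.2.image Prod.fst = X.1.powersetCard 2 := eq_of_subset_of_card_le hsub <| by
    rw [card_image_of_injOn fun D₁ h₁ D₂ h₂ => huniq D₁ h₁ D₂ h₂, hcard, card_powersetCard]
  obtain ⟨⟨d, δ⟩, hD, rfl⟩ := mem_image.1 (heq ▸ hd)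
  exact ⟨δ, hD⟩

lemma sameDiv_iff (hX : IsDPS X) {d T : Finset ℕ} {δ : Finset (Finset ℕ)} (hD : (d, δ) ∈ X.2) :
    SameDiv X d T ↔ ∃ dv ∈ δ, T ⊆ dv := by
  constructor
  · rintro ⟨D, hD', rfl, h⟩
    rwa [hX.2.2.2 D hD' _ hD rfl] at h
  · exact fun h => ⟨_, hD, rfl, h⟩

-- On four points each dividon breaks into a single unit dividon, namely itself.
lemma fudps_snd_eq_self (hX : IsDPS X) (h4 : X.1.card = 4) : (Fudps X).2 = X.2 := by
  rw [fudps_snd]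
  conv_rhs => rw [← biUnion_singleton_eq_self (s := X.2)]
  refine biUnion_congr rfl fun D hD => ?_
  obtain ⟨hd2, hdX, A, B, -, hδ, hAB, hdisj⟩ := hX.2.2.1 D hD
  have hT : (X.1 \ D.1).card = 2 := by rw [card_sdiff_of_subset hdX]; omega
  rw [← hT, powersetCard_self, image_singleton, hδ, unitDivs_eq_pair hAB hdisj hT, ← hδ]

lemma filter_fudps (hX : IsDPS X) {P : Finset ℕ} (hPX : P ⊆ X.1) (hP : P.card = 4) :
    (Fudps X).2.filter (xi · ⊆ P) = (subDPS X P).2 := by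
  ext ⟨e, δ⟩
  rw [mem_filter, fudps_snd, mem_biUnion, subDPS, mem_quadDPS]
  simp only [mem_image, mem_powersetCard, Prod.mk.injEq]
  constructor
  · rintro ⟨⟨⟨d, δ'⟩, hD, T, ⟨hT, hT2⟩, rfl, rfl⟩, hxi⟩
    simp only [xi, unionOf_unitDivs, union_subset_iff] at hxi
    have hd2 : d.card = 2 := (hX.2.2.1 _ hD).1
    have hTeq : T = P \ d :=
      eq_of_subset_of_card_le (subset_sdiff.2 ⟨hxi.2, (subset_sdiff.1 hT).2⟩)
        (by rw [card_sdiff_of_subset hxi.1]; omega)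
    subst hTeq
    exact ⟨⟨hxi.1, hd2⟩, by simp only [hX.sameDiv_iff hD]⟩
  · rintro ⟨⟨heP, he2⟩, rfl⟩
    obtain ⟨δ', hD⟩ := hX.exists_dividon (mem_powersetCard.2 ⟨heP.trans hPX, he2⟩)
    refine ⟨⟨(e, δ'), hD, P \ e, ⟨sdiff_subset_sdiff hPX le_rfl, ?_⟩, rfl, ?_⟩, ?_⟩
    · exact card_sdiff_eq_two hP (mem_powersetCard.2 ⟨heP, he2⟩)
    · simp only [hX.sameDiv_iff hD]
    · simp [xi, union_subset_iff, heP]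

lemma isSdps_iff (hX : IsDPS X) {P : Finset ℕ} {Y : PreDPS} (hPX : P ⊆ X.1) (hP : P.card = 4) :
    IsSdps X P Y ↔ Y = subDPS X P := by
  constructor
  · rintro ⟨-, -, hY, hY1, hF⟩
    rw [hY.fudps_snd_eq_self (hY1 ▸ hP), hX.filter_fudps hPX hP] at hF
    exact Prod.ext hY1 hF
  · rintro rfl
    have hY : IsDPS (subDPS X P) := isDPS_quadDPS hP
    exact ⟨hPX, hP.ge, hY, rfl, by rw [hY.fudps_snd_eq_self hP, hX.filter_fudps hPX hP]⟩

end IsDPS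

lemma phi_eq_ite {δ : Finset (Finset ℕ)} {T : Finset ℕ} (hT : T.card = 2) :
    phi δ T = if ∃ dv ∈ δ, T ⊆ dv then 1 else 0 := by
  have h2 (dv : Finset ℕ) : (T ∩ dv).card = 2 ↔ T ⊆ dv := by
    rw [← inter_eq_left]
    exact ⟨fun h => eq_of_subset_of_card_le inter_subset_left (by omega), fun h => by rw [h, hT]⟩
  simp only [phi, h2]

lemma IsDPS.phi_eq {X : PreDPS} (hX : IsDPS X) {d T : Finset ℕ} {δ : Finset (Finset ℕ)}
    (hD : (d, δ) ∈ X.2) (hT : T.card = 2) : phi δ T = if SameDiv X d T then 1 else 0 := by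
  simp only [phi_eq_ite hT, hX.sameDiv_iff hD]

namespace DPSplus

variable {X : PreDPS} {R d₁ d₂ d₃ : Finset ℕ}

lemma sameDiv_law_one (hX : DPSplus X) (hR : R ⊆ X.1) (hR4 : R.card = 4)
    (h₁ : d₁ ∈ R.powersetCard 2) (h₂ : d₂ ∈ R.powersetCard 2) (h₃ : d₃ ∈ R.powersetCard 2)
    (hu : d₁ ∪ d₂ ∪ d₃ = R) (hi : (d₁ ∩ d₂ ∩ d₃).card = 1) :
    ¬SameDiv X d₁ (R \ d₁) ↔ (SameDiv X d₂ (R \ d₂) ↔ SameDiv X d₃ (R \ d₃)) := by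
  obtain ⟨δ₁, hD₁⟩ := hX.1.exists_dividon (powersetCard_mono hR h₁)
  obtain ⟨δ₂, hD₂⟩ := hX.1.exists_dividon (powersetCard_mono hR h₂)
  obtain ⟨δ₃, hD₃⟩ := hX.1.exists_dividon (powersetCard_mono hR h₃)
  have key := hX.2.1 R hR hR4 _ hD₁ _ hD₂ _ hD₃ hu hi
  rw [hX.1.phi_eq hD₁ (card_sdiff_eq_two hR4 h₁), hX.1.phi_eq hD₂ (card_sdiff_eq_two hR4 h₂),
    hX.1.phi_eq hD₃ (card_sdiff_eq_two hR4 h₃)] at key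
  split_ifs at key <;> simp_all

lemma sameDiv_law_three (hX : DPSplus X) (hR : R ⊆ X.1) (hR4 : R.card = 4)
    (h₁ : d₁ ∈ R.powersetCard 2) (h₂ : d₂ ∈ R.powersetCard 2) (h₃ : d₃ ∈ R.powersetCard 2)
    (h₁₂ : d₁ ≠ d₂) (h₁₃ : d₁ ≠ d₃) (h₂₃ : d₂ ≠ d₃) (hc : (d₁ ∪ d₂ ∪ d₃).card = 3)
    (hn₁ : ¬SameDiv X d₁ (R \ d₁)) (hn₂ : ¬SameDiv X d₂ (R \ d₂)) :
    SameDiv X d₃ (R \ d₃) := by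
  obtain ⟨δ₁, hD₁⟩ := hX.1.exists_dividon (powersetCard_mono hR h₁)
  obtain ⟨δ₂, hD₂⟩ := hX.1.exists_dividon (powersetCard_mono hR h₂)
  obtain ⟨δ₃, hD₃⟩ := hX.1.exists_dividon (powersetCard_mono hR h₃)
  have hsub : d₁ ∪ d₂ ∪ d₃ ⊆ R := union_subset (union_subset (mem_powersetCard.1 h₁).1
    (mem_powersetCard.1 h₂).1) (mem_powersetCard.1 h₃).1
  have key := hX.2.2.2 R hR hR4 _ hD₁ _ hD₂ _ hD₃ (ne_of_apply_ne Prod.fst h₁₂)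
    (ne_of_apply_ne Prod.fst h₁₃) (ne_of_apply_ne Prod.fst h₂₃) hsub hc
  rw [hX.1.phi_eq hD₁ (card_sdiff_eq_two hR4 h₁), hX.1.phi_eq hD₂ (card_sdiff_eq_two hR4 h₂),
    hX.1.phi_eq hD₃ (card_sdiff_eq_two hR4 h₃)] at key
  simpa [hn₁, hn₂] using key

end DPSplus

lemma powersetCard_two_quad {a b c d : ℕ} (hab : a ≠ b) (hac : a ≠ c) (had : a ≠ d)
    (hbc : b ≠ c) (hbd : b ≠ d) (hcd : c ≠ d) :
    ({a, b, c, d} : Finset ℕ).powersetCard 2 =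
      {{a, b}, {a, c}, {a, d}, {b, c}, {b, d}, {c, d}} := by
  ext s
  simp only [mem_powersetCard, mem_insert, mem_singleton, card_eq_two]
  constructor
  · rintro ⟨hsub, x, y, hxy, rfl⟩
    simp only [insert_subset_iff, singleton_subset_iff, mem_insert, mem_singleton] at hsub
    grind [pair_comm]
  · rintro (rfl | rfl | rfl | rfl | rfl | rfl) <;>
      exact ⟨by simp [insert_subset_iff], _, _, by assumption, rfl⟩

lemma forall_mem_powersetCard_two_quad {p : Finset ℕ → Prop} {a b c d : ℕ} (hab : a ≠ b)
    (hac : a ≠ c) (had : a ≠ d) (hbc : b ≠ c) (hbd : b ≠ d) (hcd : c ≠ d) :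
    (∀ e ∈ ({a, b, c, d} : Finset ℕ).powersetCard 2, p e) ↔
      p {a, b} ∧ p {a, c} ∧ p {a, d} ∧ p {b, c} ∧ p {b, d} ∧ p {c, d} := by
  simp [powersetCard_two_quad hab hac had hbc hbd hcd]

lemma joined_pattern_cases {ab ac ad bc bd cd : Prop}
    (ha : ¬ab ↔ (ac ↔ ad)) (hb : ¬ab ↔ (bc ↔ bd)) (hc : ¬ac ↔ (bc ↔ cd)) (habc : ¬ab → ¬ac → bc) :
    (¬ab ∧ ¬ac ∧ ¬ad ∧ bc ∧ bd ∧ cd) ∨ (¬ab ∧ ac ∧ ad ∧ ¬bc ∧ ¬bd ∧ cd) ∨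
    (ab ∧ ¬ac ∧ ad ∧ ¬bc ∧ bd ∧ ¬cd) ∨ (ab ∧ ac ∧ ¬ad ∧ bc ∧ ¬bd ∧ ¬cd) ∨
    (¬ab ∧ ac ∧ ad ∧ bc ∧ bd ∧ ¬cd) ∨ (ab ∧ ¬ac ∧ ad ∧ bc ∧ ¬bd ∧ cd) ∨
    (ab ∧ ac ∧ ¬ad ∧ ¬bc ∧ bd ∧ cd) := by
  by_cases ab <;> by_cases ac <;> by_cases ad <;> by_cases bc <;> by_cases bd <;>
    by_cases cd <;> simp_all

lemma isom_quadDPS_conc41_or_conv4 {J : Finset ℕ → Prop} [DecidablePred J] {a b c d : ℕ}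
    (hab : a ≠ b) (hac : a ≠ c) (had : a ≠ d) (hbc : b ≠ c) (hbd : b ≠ d) (hcd : c ≠ d)
    (hJa : ¬J {a, b} ↔ (J {a, c} ↔ J {a, d})) (hJb : ¬J {a, b} ↔ (J {b, c} ↔ J {b, d}))
    (hJc : ¬J {a, c} ↔ (J {b, c} ↔ J {c, d})) (hJabc : ¬J {a, b} → ¬J {a, c} → J {b, c}) :
    Isom (quadDPS {a, b, c, d} J) Conc41 ∨ Isom (quadDPS {a, b, c, d} J) Conv4 := by
  have hP : ({a, b, c, d} : Finset ℕ).card = 4 := by grind [card_eq_succ, card_eq_three]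
  have hquad {p : Finset ℕ → Prop} :=
    forall_mem_powersetCard_two_quad (p := p) hab hac had hbc hbd hcd
  have hne : a ≠ b ∧ a ≠ c ∧ a ≠ d ∧ b ≠ c ∧ b ≠ d ∧ c ≠ d ∧
      b ≠ a ∧ c ≠ a ∧ d ≠ a ∧ c ≠ b ∧ d ≠ b ∧ d ≠ c :=
    ⟨hab, hac, had, hbc, hbd, hcd, hab.symm, hac.symm, had.symm, hbc.symm, hbd.symm, hcd.symm⟩
  rcases joined_pattern_cases hJa hJb hJc hJabc with h | h | h | h | h | h | h
  · exact .inl (isom_conc41_of_apex hP (a := a) (by simp) (hquad.2 (by simp [h, hne])))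
  · exact .inl (isom_conc41_of_apex hP (a := b) (by simp) (hquad.2 (by simp [h, hne])))
  · exact .inl (isom_conc41_of_apex hP (a := c) (by simp) (hquad.2 (by simp [h, hne])))
  · exact .inl (isom_conc41_of_apex hP (a := d) (by simp) (hquad.2 (by simp [h, hne])))
  · exact .inr (isom_conv4_of_matching hac hab had hbc.symm hcd hbd (by grind)
      (hquad.2 (by simp [h, hne])))
  · exact .inr (isom_conv4_of_matching hab hac had hbc hbd hcd rfl (hquad.2 (by simp [h, hne])))
  · exact .inr (isom_conv4_of_matching hab had hac hbd hbc hcd.symm (by grind)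
      (hquad.2 (by simp [h, hne])))

lemma DPSplus.isom_subDPS_conc41_or_conv4 {X : PreDPS} (hX : DPSplus X) {P : Finset ℕ}
    (hPX : P ⊆ X.1) (hP : P.card = 4) :
    Isom (subDPS X P) Conc41 ∨ Isom (subDPS X P) Conv4 := by
  obtain ⟨a, t, hat, rfl, ht⟩ := card_eq_succ.1 hP
  obtain ⟨b, c, d, hbc, hbd, hcd, rfl⟩ := card_eq_three.1 ht
  simp only [mem_insert, mem_singleton, not_or] at hat
  obtain ⟨hab, hac, had⟩ := hat
  have hpair {x y : ℕ} (hxy : x ≠ y) (hx : x ∈ ({a, b, c, d} : Finset ℕ) := by simp)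
      (hy : y ∈ ({a, b, c, d} : Finset ℕ) := by simp) :
      {x, y} ∈ ({a, b, c, d} : Finset ℕ).powersetCard 2 :=
    mem_powersetCard.2 ⟨insert_subset hx (singleton_subset_iff.2 hy), card_pair hxy⟩
  refine isom_quadDPS_conc41_or_conv4 hab hac had hbc hbd hcd ?_ ?_ ?_ ?_
  · exact hX.sameDiv_law_one hPX hP (hpair hab) (hpair hac) (hpair had) (by grind)
      (by grind [card_eq_one])
  · exact hX.sameDiv_law_one hPX hP (hpair hab) (hpair hbc) (hpair hbd) (by grind)
      (by grind [card_eq_one])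
  · exact hX.sameDiv_law_one hPX hP (hpair hac) (hpair hbc) (hpair hcd) (by grind)
      (by grind [card_eq_one])
  · exact hX.sameDiv_law_three hPX hP (hpair hab) (hpair hac) (hpair hbc) (by grind) (by grind)
      (by grind) (card_eq_three.2 ⟨a, b, c, hab, hac, hbc, by grind⟩)

lemma card_joined_of_isom_conc41 {P : Finset ℕ} {J : Finset ℕ → Prop} [DecidablePred J]
    (h : Isom (quadDPS P J) Conc41) : #{d ∈ P.powersetCard 2 | J d} = 3 := by
  rw [conc41_eq_quadDPS] at h
  rw [card_filter_eq_of_isom h]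
  decide

lemma card_joined_of_isom_conv4 {P : Finset ℕ} {J : Finset ℕ → Prop} [DecidablePred J]
    (h : Isom (quadDPS P J) Conv4) : #{d ∈ P.powersetCard 2 | J d} = 4 := by
  rw [conv4_eq_quadDPS] at h
  rw [card_filter_eq_of_isom h]
  decide

lemma card_filter_subset_or_subset {A B : Finset ℕ} (h : Disjoint A B) :
    #{T ∈ (A ∪ B).powersetCard 2 | T ⊆ A ∨ T ⊆ B} = (#A).choose 2 + (#B).choose 2 := by
  have hsplit : {T ∈ (A ∪ B).powersetCard 2 | T ⊆ A ∨ T ⊆ B} =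
      A.powersetCard 2 ∪ B.powersetCard 2 := by
    ext T
    simp only [mem_filter, mem_union, mem_powersetCard]
    constructor
    · rintro ⟨⟨-, hT⟩, hA | hB⟩
      exacts [.inl ⟨hA, hT⟩, .inr ⟨hB, hT⟩]
    · rintro (⟨hA, hT⟩ | ⟨hB, hT⟩)
      exacts [⟨⟨hA.trans subset_union_left, hT⟩, .inl hA⟩,
        ⟨⟨hB.trans subset_union_right, hT⟩, .inr hB⟩]
  have hdisj : Disjoint (A.powersetCard 2) (B.powersetCard 2) := by
    refine disjoint_left.2 fun T hA hB => ?_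
    obtain ⟨hTA, hT⟩ := mem_powersetCard.1 hA
    have hT0 : T = ∅ := (disjoint_self_iff_empty T).1 (h.mono hTA (mem_powersetCard.1 hB).1)
    simp [hT0] at hT
  rw [hsplit, card_union_of_disjoint hdisj, card_powersetCard, card_powersetCard]

lemma IsDPS.odd_card_sameDiv {X : PreDPS} (hX : IsDPS X) {d : Finset ℕ}
    (hd : d ∈ X.1.powersetCard 2) (h3 : (X.1 \ d).card = 3) :
    Odd #{T ∈ (X.1 \ d).powersetCard 2 | SameDiv X d T} := by
  obtain ⟨δ, hD⟩ := hX.exists_dividon hd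
  obtain ⟨-, -, A, B, -, rfl, hAB, hdisj⟩ := hX.2.2.1 _ hD
  have hdisj' : Disjoint A B := disjoint_iff_inter_eq_empty.2 hdisj
  have hsame (T : Finset ℕ) : SameDiv X d T ↔ T ⊆ A ∨ T ⊆ B := by
    simp [hX.sameDiv_iff hD]
  have hcard : #A + #B = 3 := by
    rw [← card_union_of_disjoint hdisj', hAB, h3]
  simp only at hAB
  simp only [hsame, ← hAB, card_filter_subset_or_subset hdisj']
  obtain ⟨hB, hA⟩ : #B = 3 - #A ∧ #A ≤ 3 := by omega
  rw [hB]
  interval_cases #A <;> decide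

lemma sum_card_sameDiv_eq (X : PreDPS) :
    ∑ P ∈ X.1.powersetCard 4, #{d ∈ P.powersetCard 2 | SameDiv X d (P \ d)} =
      ∑ d ∈ X.1.powersetCard 2, #{T ∈ (X.1 \ d).powersetCard 2 | SameDiv X d T} := by
  let r (P d : Finset ℕ) : Prop := d ⊆ P ∧ SameDiv X d (P \ d)
  calc ∑ P ∈ X.1.powersetCard 4, #{d ∈ P.powersetCard 2 | SameDiv X d (P \ d)}
      _ = ∑ P ∈ X.1.powersetCard 4, #((X.1.powersetCard 2).bipartiteAbove r P) := by
        refine sum_congr rfl fun P hP => congrArg card (ext fun d => ?_)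
        have hPX := (mem_powersetCard.1 hP).1
        simp only [bipartiteAbove, r, mem_filter, mem_powersetCard]
        exact ⟨fun ⟨⟨hdP, hd⟩, hS⟩ => ⟨⟨hdP.trans hPX, hd⟩, hdP, hS⟩,
          fun ⟨⟨_, hd⟩, hdP, hS⟩ => ⟨⟨hdP, hd⟩, hS⟩⟩
      _ = ∑ d ∈ X.1.powersetCard 2, #((X.1.powersetCard 4).bipartiteBelow r d) :=
        sum_card_bipartiteAbove_eq_sum_card_bipartiteBelow r
      _ = ∑ d ∈ X.1.powersetCard 2, #{T ∈ (X.1 \ d).powersetCard 2 | SameDiv X d T} := by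
        refine sum_congr rfl fun d hd => ?_
        obtain ⟨hdX, hd2⟩ := mem_powersetCard.1 hd
        refine card_nbij' (· \ d) (· ∪ d) ?_ ?_ ?_ ?_
        · intro P hP
          simp only [bipartiteBelow, r, mem_coe, mem_filter, mem_powersetCard] at hP ⊢
          obtain ⟨⟨hPX, hP4⟩, hdP, hS⟩ := hP
          exact ⟨⟨sdiff_subset_sdiff hPX le_rfl, by rw [card_sdiff_of_subset hdP]; omega⟩, hS⟩
        · intro T hT
          simp only [bipartiteBelow, r, mem_coe, mem_filter, mem_powersetCard] at hT ⊢
          obtain ⟨⟨hTX, hT2⟩, hS⟩ := hT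
          have hTd : Disjoint T d := (subset_sdiff.1 hTX).2
          refine ⟨⟨union_subset (hTX.trans sdiff_subset) hdX, ?_⟩, subset_union_right, ?_⟩
          · rw [card_union_of_disjoint hTd]; omega
          · rwa [union_sdiff_cancel_right hTd]
        · intro P hP
          simp only [bipartiteBelow, r, mem_coe, mem_filter] at hP
          exact sdiff_union_of_subset hP.2.1
        · intro T hT
          simp only [mem_coe, mem_filter, mem_powersetCard] at hT
          exact union_sdiff_cancel_right (subset_sdiff.1 hT.1.1).2

open Classical in
lemma DPSplus.even_card_isom_conc41 {X : PreDPS} (hX : DPSplus X) (h5 : X.1.card = 5) :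
    Even #{P ∈ X.1.powersetCard 4 | Isom (subDPS X P) Conc41} := by
  have hsum : Even (∑ P ∈ X.1.powersetCard 4, #{d ∈ P.powersetCard 2 | SameDiv X d (P \ d)}) := by
    rw [sum_card_sameDiv_eq, even_sum_iff_even_card_odd, filter_true_of_mem fun d hd =>
      hX.1.odd_card_sameDiv hd (by rw [card_sdiff_of_subset (mem_powersetCard.1 hd).1,
        (mem_powersetCard.1 hd).2, h5]), card_powersetCard, h5]
    exact ⟨5, rfl⟩
  have hodd : ∀ P ∈ X.1.powersetCard 4,
      Isom (subDPS X P) Conc41 ↔ Odd #{d ∈ P.powersetCard 2 | SameDiv X d (P \ d)} := by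
    intro P hP
    obtain ⟨hPX, hP4⟩ := mem_powersetCard.1 hP
    refine ⟨fun h => ?_, fun h => ?_⟩
    · rw [card_joined_of_isom_conc41 h]
      exact ⟨1, rfl⟩
    · refine (hX.isom_subDPS_conc41_or_conv4 hPX hP4).resolve_right fun hconv => ?_
      rw [card_joined_of_isom_conv4 hconv] at h
      exact Nat.not_odd_iff_even.2 ⟨2, rfl⟩ h
  rwa [even_sum_iff_even_card_odd, ← filter_congr hodd] at hsum

open Classical in
lemma IsDPS.ncard_isSdps_isom_conc41 {X : PreDPS} (hX : IsDPS X) :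
    Set.ncard {Y : PreDPS | ∃ Ps, Ps.card = 4 ∧ IsSdps X Ps Y ∧ Isom Y Conc41} =
      #{P ∈ X.1.powersetCard 4 | Isom (subDPS X P) Conc41} := by
  have hset : {Y : PreDPS | ∃ Ps, Ps.card = 4 ∧ IsSdps X Ps Y ∧ Isom Y Conc41} =
      subDPS X '' ↑(({P ∈ X.1.powersetCard 4 | Isom (subDPS X P) Conc41} :
        Finset (Finset ℕ))) := by
    ext Y
    simp only [Set.mem_ofPred_eq, Set.mem_image, mem_coe, mem_filter, mem_powersetCard]
    constructor
    · rintro ⟨P, hP4, hY, hiso⟩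
      rw [(hX.isSdps_iff hY.1 hP4).1 hY] at hiso ⊢
      exact ⟨P, ⟨⟨hY.1, hP4⟩, hiso⟩, rfl⟩
    · rintro ⟨P, ⟨⟨hPX, hP4⟩, hiso⟩, rfl⟩
      exact ⟨P, hP4, (hX.isSdps_iff hPX hP4).2 rfl, hiso⟩
  rw [hset, Set.ncard_image_of_injective _ fun _ _ h => congrArg Prod.fst h, Set.ncard_coe_finset]

/-- Theorem 2: every div point set of 5 points in DPS⁺ has exactly 0, 2 or 4 sub div
point sets of 4 points isomorphic to Conc₄¹, the remaining ones being isomorphic to Conv₄. -/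
theorem stmt_1 (X : PreDPS) (hX : DPSplus X) (h5 : X.1.card = 5) :
    (Set.ncard {Y : PreDPS | ∃ Ps, Ps.card = 4 ∧ IsSdps X Ps Y ∧ Isom Y Conc41} = 0 ∨
     Set.ncard {Y : PreDPS | ∃ Ps, Ps.card = 4 ∧ IsSdps X Ps Y ∧ Isom Y Conc41} = 2 ∨
     Set.ncard {Y : PreDPS | ∃ Ps, Ps.card = 4 ∧ IsSdps X Ps Y ∧ Isom Y Conc41} = 4) ∧
    ∀ Ps Y, Ps.card = 4 → IsSdps X Ps Y → ¬ Isom Y Conc41 → Isom Y Conv4 := by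
  classical
  refine ⟨?_, fun P Y hP4 hY hnot => ?_⟩
  · have hle : #{P ∈ X.1.powersetCard 4 | Isom (subDPS X P) Conc41} ≤ 5 :=
      (card_filter_le _ _).trans (by rw [card_powersetCard, h5]; rfl)
    obtain ⟨k, hk⟩ := hX.even_card_isom_conc41 h5
    rw [hX.1.ncard_isSdps_isom_conc41]
    omega
  · rw [(hX.1.isSdps_iff hY.1 hP4).1 hY] at hnot ⊢
    exact (hX.isom_subDPS_conc41_or_conv4 hY.1 hP4).resolve_left hnot
end

section
/- A unit div point set (P,Ω) with |P| ≥ 4 satisfies laws (U1), (U2), (U3) if and only if for every 4-element subset R of P, the 6-element set {D ∈ Ω : ξ(D) = R} of unit dividons is isomorphic either to the dividon set of Conc₄¹ or to the dividon set of Conv₄ (core of Lemma 3). -/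
open Finset

/-!
Fix a 4-set `R = {p, q, r, s}`. Counting shows that every slot `(d, ⋃δ)` of a unit div point set
is filled, so `{D ∈ Ω : ξ(D) = R}` holds exactly one unit dividon per pair `{x, y} ⊆ R`, which
either keeps the two remaining points together (`ψ = 1`) or splits them (`ψ = 0`). Relabelling
`R` as `{1, 2, 3, 4}` preserves the laws, leaving 64 configurations. Call a pair split if its
dividon has `ψ = 0`: (U1) says every point lies on an odd number of split pairs, and (U3) rules
out all six being split, so the split pairs form a star (Conc₄¹) or a perfect matching (Conv₄).
Conversely both models satisfy the laws, and the laws transfer along isomorphisms.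
-/

def mapDividon (f : ℕ → ℕ) (D : Dividon) : Dividon :=
  (D.1.image f, D.2.image (Finset.image f))

lemma image_unionOf (f : ℕ → ℕ) (δ : Finset (Finset ℕ)) :
    (unionOf δ).image f = unionOf (δ.image (Finset.image f)) := by
  rw [unionOf, unionOf, sup_image,
    apply_sup_eq_sup_comp (image f) (fun _ _ => image_union _ _) (image_empty f)]
  rfl

lemma xi_mapDividon (f : ℕ → ℕ) (D : Dividon) : xi (mapDividon f D) = (xi D).image f := by
  rw [xi, xi, image_union, image_unionOf]
  rfl

lemma subset_xi_of_mem {D : Dividon} {A : Finset ℕ} (hA : A ∈ D.2) : A ⊆ xi D :=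
  (le_sup (f := id) hA).trans subset_union_right

lemma image_injOn_of_injOn {f : ℕ → ℕ} {S : Finset ℕ} (hf : Set.InjOn f S) :
    Set.InjOn (Finset.image f) {A | A ⊆ S} := fun _ hA _ hB h =>
  (image_eq_image_iff_of_injOn hf hA hB).1 h

lemma psi_mapDividon {f : ℕ → ℕ} {D : Dividon} (hf : Set.InjOn f (xi D)) :
    psi (mapDividon f D).2 = psi D.2 := by
  have hcard : ∀ A ∈ D.2, (A.image f).card = A.card := fun A hA =>
    card_image_of_injOn (hf.mono (coe_subset.2 (subset_xi_of_mem hA)))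
  simp only [psi, mapDividon, exists_mem_image]
  exact if_congr ⟨fun ⟨A, hA, h⟩ => ⟨A, hA, hcard A hA ▸ h⟩,
    fun ⟨A, hA, h⟩ => ⟨A, hA, (hcard A hA).trans h⟩⟩ rfl rfl

lemma mapDividon_injOn {f : ℕ → ℕ} {Ω : Finset Dividon} (hf : Set.InjOn f ↑(Ω.sup xi)) :
    Set.InjOn (mapDividon f) Ω := by
  intro D hD E hE h
  have hD' : xi D ⊆ Ω.sup xi := le_sup hD
  have hE' : xi E ⊆ Ω.sup xi := le_sup hE
  have hdivs : ∀ A ∈ D.2 ∪ E.2, A ⊆ Ω.sup xi := fun A hA => by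
    rcases mem_union.1 hA with hA | hA
    exacts [(subset_xi_of_mem hA).trans hD', (subset_xi_of_mem hA).trans hE']
  refine Prod.ext ((image_eq_image_iff_of_injOn hf ?_ ?_).1 (congrArg Prod.fst h))
    ((image_eq_image_iff_of_injOn ((image_injOn_of_injOn hf).mono hdivs) subset_union_left
      subset_union_right).1 (congrArg Prod.snd h))
  exacts [subset_union_left.trans hD', subset_union_left.trans hE']

lemma sup_xi_image_mapDividon (f : ℕ → ℕ) (Ω : Finset Dividon) :
    (Ω.image (mapDividon f)).sup xi = (Ω.sup xi).image f := by
  rw [sup_image, apply_sup_eq_sup_comp (image f) (fun _ _ => image_union _ _) (image_empty f)]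
  exact sup_congr rfl fun D _ => xi_mapDividon f D

lemma omegaIsom_image {f : ℕ → ℕ} {Ω : Finset Dividon} (hf : Set.InjOn f ↑(Ω.sup xi)) :
    OmegaIsom Ω (Ω.image (mapDividon f)) := by
  refine ⟨(card_image_of_injOn (mapDividon_injOn hf)).symm, f, ?_,
    fun D hD => mem_image_of_mem _ hD⟩
  rw [sup_xi_image_mapDividon, coe_image]
  exact hf.bijOn_image

lemma OmegaIsom.trans {Ω₁ Ω₂ Ω₃ : Finset Dividon} (h₁₂ : OmegaIsom Ω₁ Ω₂)
    (h₂₃ : OmegaIsom Ω₂ Ω₃) : OmegaIsom Ω₁ Ω₃ := by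
  obtain ⟨hc₁₂, f, hf, hmem₁₂⟩ := h₁₂
  obtain ⟨hc₂₃, g, hg, hmem₂₃⟩ := h₂₃
  refine ⟨hc₁₂.trans hc₂₃, g ∘ f, hg.comp hf, fun D hD => ?_⟩
  have himage : image g ∘ image f = image (g ∘ f) := funext fun _ => image_image
  simpa only [image_image, himage] using hmem₂₃ _ (hmem₁₂ D hD)

lemma OmegaIsom.exists_image_eq {Ω M : Finset Dividon} (h : OmegaIsom Ω M) :
    ∃ f : ℕ → ℕ, Set.InjOn f ↑(Ω.sup xi) ∧ Ω.image (mapDividon f) = M := by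
  obtain ⟨hcard, f, hf, hmem⟩ := h
  refine ⟨f, hf.injOn, eq_of_subset_of_card_le (image_subset_iff.2 hmem) ?_⟩
  rw [card_image_of_injOn (mapDividon_injOn hf.injOn), hcard]

def LocalLaws (Ω : Finset Dividon) : Prop :=
  (∀ D₁ ∈ Ω, ∀ D₂ ∈ Ω, ∀ D₃ ∈ Ω, D₁ ≠ D₂ → D₁ ≠ D₃ → D₂ ≠ D₃ →
      (D₁.1 ∩ D₂.1 ∩ D₃.1).card = 1 → (psi D₁.2 = 0 ↔ psi D₂.2 = psi D₃.2)) ∧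
  (∀ D₁ ∈ Ω, ∀ D₂ ∈ Ω, ∀ D₃ ∈ Ω, D₁ ≠ D₂ → D₁ ≠ D₃ → D₂ ≠ D₃ →
      (D₁.1 ∩ D₂.1 ∩ D₃.1).card = 1 → (psi D₁.2 = 1 ↔ psi D₂.2 ≠ psi D₃.2)) ∧
  (∀ D₁ ∈ Ω, ∀ D₂ ∈ Ω, ∀ D₃ ∈ Ω, D₁ ≠ D₂ → D₁ ≠ D₃ → D₂ ≠ D₃ →
      (D₁.1 ∪ D₂.1 ∪ D₃.1).card = 3 → psi D₁.2 = 0 → psi D₂.2 = 0 → psi D₃.2 = 1)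

set_option synthInstance.maxSize 2048 in
instance : DecidablePred LocalLaws := fun Ω => by unfold LocalLaws; infer_instance

lemma lawsUDPS_iff_forall_localLaws (U : PreDPS) :
    LawsUDPS U ↔ ∀ R ⊆ U.1, R.card = 4 → LocalLaws (U.2.filter fun D => xi D = R) := by
  simp only [LawsUDPS, LocalLaws, mem_filter, and_imp]
  constructor
  · rintro ⟨h₁, h₂, h₃⟩ R hR hc
    refine ⟨?_, ?_, ?_⟩ <;> intro D₁ hD₁ hx₁ D₂ hD₂ hx₂ D₃ hD₃ hx₃ n₁₂ n₁₃ n₂₃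
    exacts [h₁ R hR hc D₁ hD₁ D₂ hD₂ D₃ hD₃ n₁₂ n₁₃ n₂₃ hx₁ hx₂ hx₃,
      h₂ R hR hc D₁ hD₁ D₂ hD₂ D₃ hD₃ n₁₂ n₁₃ n₂₃ hx₁ hx₂ hx₃,
      h₃ R hR hc D₁ hD₁ D₂ hD₂ D₃ hD₃ n₁₂ n₁₃ n₂₃ hx₁ hx₂ hx₃]
  · intro h
    refine ⟨?_, ?_, ?_⟩ <;>
      intro R hR hc D₁ hD₁ D₂ hD₂ D₃ hD₃ n₁₂ n₁₃ n₂₃ hx₁ hx₂ hx₃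
    exacts [(h R hR hc).1 D₁ hD₁ hx₁ D₂ hD₂ hx₂ D₃ hD₃ hx₃ n₁₂ n₁₃ n₂₃,
      (h R hR hc).2.1 D₁ hD₁ hx₁ D₂ hD₂ hx₂ D₃ hD₃ hx₃ n₁₂ n₁₃ n₂₃,
      (h R hR hc).2.2 D₁ hD₁ hx₁ D₂ hD₂ hx₂ D₃ hD₃ hx₃ n₁₂ n₁₃ n₂₃]

lemma localLaws_image_iff {f : ℕ → ℕ} {Ω : Finset Dividon} (hf : Set.InjOn f ↑(Ω.sup xi)) :
    LocalLaws (Ω.image (mapDividon f)) ↔ LocalLaws Ω := by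
  have hsub : ∀ D ∈ Ω, xi D ⊆ Ω.sup xi := fun D hD => le_sup hD
  have hfst : ∀ D ∈ Ω, D.1 ⊆ Ω.sup xi := fun D hD => subset_union_left.trans (hsub D hD)
  have hne : ∀ D ∈ Ω, ∀ E ∈ Ω, mapDividon f D = mapDividon f E ↔ D = E :=
    fun D hD E hE => (mapDividon_injOn hf).eq_iff hD hE
  have hpsi : ∀ D ∈ Ω, psi (mapDividon f D).2 = psi D.2 :=
    fun D hD => psi_mapDividon (hf.mono (coe_subset.2 (hsub D hD)))
  have hinter : ∀ D₁ ∈ Ω, ∀ D₂ ∈ Ω, ∀ D₃ ∈ Ω,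
      ((mapDividon f D₁).1 ∩ (mapDividon f D₂).1 ∩ (mapDividon f D₃).1).card =
        (D₁.1 ∩ D₂.1 ∩ D₃.1).card := by
    intro D₁ h₁ D₂ h₂ D₃ h₃
    have hinj : ∀ {A B : Finset ℕ}, A ⊆ Ω.sup xi → B ⊆ Ω.sup xi → Set.InjOn f (↑A ∪ ↑B) :=
      fun hA hB => hf.mono (Set.union_subset (coe_subset.2 hA) (coe_subset.2 hB))
    have h₁₂ : D₁.1 ∩ D₂.1 ⊆ Ω.sup xi := inter_subset_left.trans (hfst D₁ h₁)
    rw [mapDividon, mapDividon, mapDividon,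
      ← image_inter_of_injOn _ _ (hinj (hfst D₁ h₁) (hfst D₂ h₂)),
      ← image_inter_of_injOn _ _ (hinj h₁₂ (hfst D₃ h₃)),
      card_image_of_injOn (hf.mono (coe_subset.2 (inter_subset_left.trans h₁₂)))]
  have hunion : ∀ D₁ ∈ Ω, ∀ D₂ ∈ Ω, ∀ D₃ ∈ Ω,
      ((mapDividon f D₁).1 ∪ (mapDividon f D₂).1 ∪ (mapDividon f D₃).1).card =
        (D₁.1 ∪ D₂.1 ∪ D₃.1).card := by
    intro D₁ h₁ D₂ h₂ D₃ h₃
    rw [mapDividon, mapDividon, mapDividon, ← image_union, ← image_union,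
      card_image_of_injOn (hf.mono (coe_subset.2
        (union_subset (union_subset (hfst D₁ h₁) (hfst D₂ h₂)) (hfst D₃ h₃))))]
  simp +contextual only [LocalLaws, forall_mem_image, ne_eq, hne, hpsi, hinter, hunion]

lemma OmegaIsom.localLaws_iff {Ω M : Finset Dividon} (h : OmegaIsom Ω M) :
    LocalLaws Ω ↔ LocalLaws M := by
  obtain ⟨f, hf, rfl⟩ := h.exists_image_eq
  exact (localLaws_image_iff hf).symm

def unitDividon (x y z w : ℕ) (merged : Bool) : Dividon :=
  ({x, y}, if merged then {{z, w}, ∅} else {{z}, {w}})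

def quadOmega (p q r s : ℕ) (b₁ b₂ b₃ b₄ b₅ b₆ : Bool) : Finset Dividon :=
  {unitDividon p q r s b₁, unitDividon p r q s b₂, unitDividon p s q r b₃,
   unitDividon q r p s b₄, unitDividon q s p r b₅, unitDividon r s p q b₆}

def quadMap (a b c x : ℕ) : ℕ :=
  if x = a then 1 else if x = b then 2 else if x = c then 3 else 4

lemma xi_unitDividon (x y z w : ℕ) (b : Bool) : xi (unitDividon x y z w b) = {x, y, z, w} := by
  cases b <;> ext <;> simp [xi, unitDividon, unionOf] <;> tauto

lemma mapDividon_unitDividon (f : ℕ → ℕ) (x y z w : ℕ) (b : Bool) :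
    mapDividon f (unitDividon x y z w b) = unitDividon (f x) (f y) (f z) (f w) b := by
  cases b <;> simp [mapDividon, unitDividon]

section Quad

variable {p q r s : ℕ} {b₁ b₂ b₃ b₄ b₅ b₆ : Bool}

lemma xi_of_mem_quadOmega {D : Dividon} (hD : D ∈ quadOmega p q r s b₁ b₂ b₃ b₄ b₅ b₆) :
    xi D = {p, q, r, s} := by
  simp only [quadOmega, mem_insert, mem_singleton] at hD
  rcases hD with rfl | rfl | rfl | rfl | rfl | rfl <;>
    rw [xi_unitDividon] <;> ext <;> simp <;> tauto

lemma sup_xi_quadOmega : (quadOmega p q r s b₁ b₂ b₃ b₄ b₅ b₆).sup xi = {p, q, r, s} := by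
  rw [sup_congr rfl fun D hD => xi_of_mem_quadOmega hD,
    sup_const ⟨unitDividon p q r s b₁, by simp [quadOmega]⟩]

lemma exists_mem_quadOmega_fst_eq {d : Finset ℕ} (hd : d ⊆ {p, q, r, s}) (hc : d.card = 2) :
    ∃ E ∈ quadOmega p q r s b₁ b₂ b₃ b₄ b₅ b₆, E.1 = d := by
  obtain ⟨x, y, hxy, rfl⟩ := card_eq_two.1 hc
  have hx : x ∈ ({p, q, r, s} : Finset ℕ) := hd (by simp)
  have hy : y ∈ ({p, q, r, s} : Finset ℕ) := hd (by simp)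
  simp only [mem_insert, mem_singleton] at hx hy
  rcases hx with rfl | rfl | rfl | rfl <;> rcases hy with rfl | rfl | rfl | rfl <;>
    simp_all [quadOmega, unitDividon, pair_comm]

lemma image_mapDividon_quadOmega (f : ℕ → ℕ) :
    (quadOmega p q r s b₁ b₂ b₃ b₄ b₅ b₆).image (mapDividon f) =
      quadOmega (f p) (f q) (f r) (f s) b₁ b₂ b₃ b₄ b₅ b₆ := by
  simp only [quadOmega, image_insert, image_singleton, mapDividon_unitDividon]

lemma quadMap_injOn : Set.InjOn (quadMap p q r) ↑({p, q, r, s} : Finset ℕ) := by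
  intro x hx y hy h
  simp only [coe_insert, coe_singleton, Set.mem_insert_iff, Set.mem_singleton_iff] at hx hy
  unfold quadMap at h
  rcases hx with rfl | rfl | rfl | rfl <;> rcases hy with rfl | rfl | rfl | rfl <;>
    split_ifs at h <;> omega

end Quad

lemma localLaws_conc41 : LocalLaws Conc41.2 := by decide

lemma localLaws_conv4 : LocalLaws Conv4.2 := by decide

lemma quadOmega_classification :
    ∀ b₁ b₂ b₃ b₄ b₅ b₆ : Bool, LocalLaws (quadOmega 1 2 3 4 b₁ b₂ b₃ b₄ b₅ b₆) →
      ∃ a ∈ ({1, 2, 3, 4} : Finset ℕ), ∃ b ∈ ({1, 2, 3, 4} : Finset ℕ),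
      ∃ c ∈ ({1, 2, 3, 4} : Finset ℕ), ∃ d ∈ ({1, 2, 3, 4} : Finset ℕ),
        ({a, b, c, d} : Finset ℕ) = {1, 2, 3, 4} ∧
        ((quadOmega 1 2 3 4 b₁ b₂ b₃ b₄ b₅ b₆).image (mapDividon (quadMap a b c)) = Conc41.2 ∨
         (quadOmega 1 2 3 4 b₁ b₂ b₃ b₄ b₅ b₆).image (mapDividon (quadMap a b c)) = Conv4.2) := by
  decide

lemma IsUnitDividon.snd_eq {P : Finset ℕ} {D : Dividon} (hD : IsUnitDividon P D) {z w : ℕ}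
    (hu : unionOf D.2 = {z, w}) : D.2 = {{z, w}, ∅} ∨ D.2 = {{z}, {w}} := by
  obtain ⟨-, -, A, B, -, hδ, -, -, hAB⟩ := hD
  rw [hδ, unionOf, sup_insert, sup_singleton] at hu
  have hmem : ∀ x, x ∈ A ∨ x ∈ B ↔ x = z ∨ x = w := fun x => by
    simpa using congrArg (x ∈ ·) hu
  have hdisj : ∀ x, ¬(x ∈ A ∧ x ∈ B) := fun x hx => by simpa [hAB] using mem_inter.2 hx
  rw [hδ]
  by_cases hzA : z ∈ A <;> by_cases hwA : w ∈ A
  · left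
    rw [show A = {z, w} by ext x; grind, show B = ∅ by ext x; grind]
  · right
    rw [show A = {z} by ext x; grind, show B = {w} by ext x; grind]
  · right
    rw [show A = {w} by ext x; grind, show B = {z} by ext x; grind, pair_comm]
  · left
    rw [show A = ∅ by ext x; grind, show B = {z, w} by ext x; grind, pair_comm]

namespace IsUDPS

variable {U : PreDPS} (hU : IsUDPS U)
include hU

lemma unionOf_eq_xi_sdiff {D : Dividon} (hD : D ∈ U.2) : unionOf D.2 = xi D \ D.1 := by
  obtain ⟨-, -, A, B, -, hδ, -, hsub, -⟩ := hU.2.2.1 D hD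
  have hdisj : Disjoint D.1 (unionOf D.2) := by
    rw [hδ, unionOf, sup_insert, sup_singleton]
    exact disjoint_sdiff.mono_right hsub
  rw [xi, union_sdiff_cancel_left hdisj]

lemma eq_of_fst_eq_of_xi_eq {D E : Dividon} (hD : D ∈ U.2) (hE : E ∈ U.2) (h₁ : D.1 = E.1)
    (hxi : xi D = xi E) : D = E :=
  hU.2.2.2 D hD E hE h₁ (by rw [hU.unionOf_eq_xi_sdiff hD, hU.unionOf_eq_xi_sdiff hE, h₁, hxi])

-- `D ↦ (D.1, ⋃D.2)` is injective into a set of `C(|P|,2)·C(|P|-2,2)` slots, hence onto.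
lemma exists_mem_fst_unionOf {d T : Finset ℕ} (hd : d ⊆ U.1) (hdc : d.card = 2)
    (hT : T ⊆ U.1 \ d) (hTc : T.card = 2) : ∃ D ∈ U.2, D.1 = d ∧ unionOf D.2 = T := by
  let slots := (U.1.powersetCard 2).sigma fun e => (U.1 \ e).powersetCard 2
  have hslot : ∀ D ∈ U.2, (⟨D.1, unionOf D.2⟩ : Σ _ : Finset ℕ, Finset ℕ) ∈ slots := by
    intro D hD
    obtain ⟨hc, hsub, A, B, -, hδ, hABc, hAB, -⟩ := hU.2.2.1 D hD
    rw [hδ, unionOf, sup_insert, sup_singleton]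
    exact mem_sigma.2 ⟨mem_powersetCard.2 ⟨hsub, hc⟩, mem_powersetCard.2 ⟨hAB, hABc⟩⟩
  have hcard : slots.card ≤ U.2.card := by
    rw [card_sigma, sum_const_nat fun e he => by
      rw [card_powersetCard, card_sdiff_of_subset (mem_powersetCard.1 he).1,
        (mem_powersetCard.1 he).2], card_powersetCard, hU.2.1]
  have hinj : Set.InjOn (fun D : Dividon => (⟨D.1, unionOf D.2⟩ : Σ _ : Finset ℕ, Finset ℕ))
      U.2 := fun D hD E hE h =>
    hU.2.2.2 D hD E hE (congrArg Sigma.fst h) (by simpa using (Sigma.mk.inj h).2)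
  have hdT : ⟨d, T⟩ ∈ slots :=
    mem_sigma.2 ⟨mem_powersetCard.2 ⟨hd, hdc⟩, mem_powersetCard.2 ⟨hT, hTc⟩⟩
  obtain ⟨D, hD, h⟩ := surjOn_of_injOn_of_card_le _ hslot hinj hcard hdT
  simp only [Sigma.mk.injEq, heq_eq_eq] at h
  exact ⟨D, hD, h⟩

lemma exists_unitDividon_mem {x y z w : ℕ} (hx : x ∈ U.1) (hy : y ∈ U.1) (hz : z ∈ U.1)
    (hw : w ∈ U.1) (hxy : x ≠ y) (hxz : x ≠ z) (hxw : x ≠ w) (hyz : y ≠ z) (hyw : y ≠ w)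
    (hzw : z ≠ w) : ∃ b, unitDividon x y z w b ∈ U.2 := by
  obtain ⟨D, hD, hd, hT⟩ := hU.exists_mem_fst_unionOf (d := {x, y}) (T := {z, w})
    (by simp [insert_subset_iff, hx, hy]) (card_pair hxy)
    (by simp [insert_subset_iff, hz, hw, hxz.symm, hyz.symm, hxw.symm, hyw.symm]) (card_pair hzw)
  rcases (hU.2.2.1 D hD).snd_eq hT with h | h
  · exact ⟨true, by simpa [unitDividon, ← hd, ← h] using hD⟩
  · exact ⟨false, by simpa [unitDividon, ← hd, ← h] using hD⟩

lemma filter_xi_eq {R : Finset ℕ} {Ω : Finset Dividon} (hΩ : Ω ⊆ U.2)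
    (hxi : ∀ E ∈ Ω, xi E = R) (hfst : ∀ D ∈ U.2, xi D = R → ∃ E ∈ Ω, E.1 = D.1) :
    U.2.filter (fun D => xi D = R) = Ω := by
  ext D
  rw [mem_filter]
  refine ⟨fun ⟨hD, hDR⟩ => ?_, fun hD => ⟨hΩ hD, hxi D hD⟩⟩
  obtain ⟨E, hE, hED⟩ := hfst D hD hDR
  rwa [hU.eq_of_fst_eq_of_xi_eq hD (hΩ hE) hED.symm (hDR.trans (hxi E hE).symm)]

lemma exists_filter_xi_eq_quadOmega {p q r s : ℕ} (hp : p ∈ U.1) (hq : q ∈ U.1)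
    (hr : r ∈ U.1) (hs : s ∈ U.1) (hpq : p ≠ q) (hpr : p ≠ r) (hps : p ≠ s) (hqr : q ≠ r)
    (hqs : q ≠ s) (hrs : r ≠ s) :
    ∃ b₁ b₂ b₃ b₄ b₅ b₆ : Bool, U.2.filter (fun D => xi D = {p, q, r, s}) =
      quadOmega p q r s b₁ b₂ b₃ b₄ b₅ b₆ := by
  obtain ⟨b₁, h₁⟩ := hU.exists_unitDividon_mem hp hq hr hs hpq hpr hps hqr hqs hrs
  obtain ⟨b₂, h₂⟩ := hU.exists_unitDividon_mem hp hr hq hs hpr hpq hps hqr.symm hrs hqs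
  obtain ⟨b₃, h₃⟩ := hU.exists_unitDividon_mem hp hs hq hr hps hpq hpr hqs.symm hrs.symm hqr
  obtain ⟨b₄, h₄⟩ := hU.exists_unitDividon_mem hq hr hp hs hqr hpq.symm hqs hpr.symm hrs hps
  obtain ⟨b₅, h₅⟩ :=
    hU.exists_unitDividon_mem hq hs hp hr hqs hpq.symm hqr hps.symm hrs.symm hpr
  obtain ⟨b₆, h₆⟩ :=
    hU.exists_unitDividon_mem hr hs hp hq hrs hpr.symm hqr.symm hps.symm hqs.symm hpq
  refine ⟨b₁, b₂, b₃, b₄, b₅, b₆, hU.filter_xi_eq ?_ (fun E => xi_of_mem_quadOmega) ?_⟩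
  · simp [quadOmega, insert_subset_iff, h₁, h₂, h₃, h₄, h₅, h₆]
  · intro D hD hxi
    obtain ⟨hc, -⟩ := hU.2.2.1 D hD
    exact exists_mem_quadOmega_fst_eq (hxi ▸ subset_union_left) hc

lemma omegaIsom_of_localLaws {R : Finset ℕ} (hR : R ⊆ U.1) (hc : R.card = 4)
    (h : LocalLaws (U.2.filter fun D => xi D = R)) :
    OmegaIsom (U.2.filter fun D => xi D = R) Conc41.2 ∨
      OmegaIsom (U.2.filter fun D => xi D = R) Conv4.2 := by
  obtain ⟨p, q, r, s, hpq, hpr, hps, hqr, hqs, hrs, rfl⟩ := card_eq_four.1 hc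
  simp only [insert_subset_iff, singleton_subset_iff] at hR
  obtain ⟨b₁, b₂, b₃, b₄, b₅, b₆, hΩ⟩ := hU.exists_filter_xi_eq_quadOmega hR.1 hR.2.1 hR.2.2.1
    hR.2.2.2 hpq hpr hps hqr hqs hrs
  rw [hΩ] at h ⊢
  have hcanon : OmegaIsom (quadOmega p q r s b₁ b₂ b₃ b₄ b₅ b₆)
      (quadOmega 1 2 3 4 b₁ b₂ b₃ b₄ b₅ b₆) := by
    have h := omegaIsom_image (f := quadMap p q r) (Ω := quadOmega p q r s b₁ b₂ b₃ b₄ b₅ b₆)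
      (by rw [sup_xi_quadOmega]; exact quadMap_injOn)
    simpa [image_mapDividon_quadOmega, quadMap, hpq.symm, hpr.symm, hps.symm, hqr.symm,
      hqs.symm, hrs.symm] using h
  obtain ⟨a, -, b, -, c, -, d, -, habcd, hmodel⟩ :=
    quadOmega_classification _ _ _ _ _ _ (hcanon.localLaws_iff.1 h)
  have hσ := omegaIsom_image (f := quadMap a b c) (Ω := quadOmega 1 2 3 4 b₁ b₂ b₃ b₄ b₅ b₆)
    (by rw [sup_xi_quadOmega, ← habcd]; exact quadMap_injOn)
  rcases hmodel with hmodel | hmodel <;> rw [hmodel] at hσ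
  exacts [Or.inl (hcanon.trans hσ), Or.inr (hcanon.trans hσ)]

end IsUDPS

theorem stmt_6_general (U : PreDPS) (hU : IsUDPS U) :
    LawsUDPS U ↔
      ∀ R ⊆ U.1, R.card = 4 →
        (OmegaIsom (U.2.filter fun D => xi D = R) Conc41.2 ∨
         OmegaIsom (U.2.filter fun D => xi D = R) Conv4.2) := by
  rw [lawsUDPS_iff_forall_localLaws]
  refine forall₃_congr fun R hR hc => ⟨hU.omegaIsom_of_localLaws hR hc, ?_⟩
  rintro (h | h)
  exacts [h.localLaws_iff.2 localLaws_conc41, h.localLaws_iff.2 localLaws_conv4]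

/-- Core of Lemma 3: a unit div point set `(P,Ω)` with `|P| ≥ 4` satisfies (U1), (U2), (U3)
iff for every 4-element subset `R` of `P`, the set `{D ∈ Ω : ξ(D) = R}` is isomorphic
to the dividon set of Conc₄¹ or to the dividon set of Conv₄. -/
theorem stmt_6 (U : PreDPS) (hU : IsUDPS U) (h4 : 4 ≤ U.1.card) :
    LawsUDPS U ↔
      ∀ R ⊆ U.1, R.card = 4 →
        (OmegaIsom (U.2.filter fun D => xi D = R) Conc41.2 ∨
         OmegaIsom (U.2.filter fun D => xi D = R) Conv4.2) :=
  stmt_6_general U hU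
end
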